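/- arXiv:2005.13327 — 3 statements merged into one kernel-verified Lean document; each statement's English description precedes it below -/
import Mathlib

section
/- Let μ be the product Bernoulli(1−q) measure on Ω = {0,1}^Λ with Λ = {0,...,ℓ−1}^d, q ∈ (0,1). Let f(η) be the number of connected clusters of empty sites of η in Λ (with respect to nearest-neighbor adjacency in Λ). Then Var_μ(f) ≥ q(1−q)^{2d+1}·|3ℤ^d ∩ Λ|. -/
open Finset

noncomputable section

/-- The graph on the empty sites of `η` in the box `Λ = {0,…,ℓ−1}^d`, with nearest-neighbour
adjacency. -/
def emptyClusterGraph {d ℓ : ℕ} (η : (Fin d → Fin ℓ) → Bool) :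
    SimpleGraph {x : Fin d → Fin ℓ // η x = false} :=
  SimpleGraph.fromRel fun a b => ∑ i, |((a.1 i : ℤ)) - (b.1 i : ℤ)| = 1

/-- `f(η)` = the number of connected clusters of empty sites of `η` in `Λ`. -/
def clusterCount {d ℓ : ℕ} (η : (Fin d → Fin ℓ) → Bool) : ℕ :=
  Nat.card (emptyClusterGraph η).ConnectedComponent

/-- Expectation under the product Bernoulli(1−q) measure on `{0,1}^Λ`
(`η x = true` means occupied, probability `1−q`; `η x = false` means empty, probability `q`). -/
def boxExp (d ℓ : ℕ) (q : ℝ) (g : ((Fin d → Fin ℓ) → Bool) → ℝ) : ℝ :=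
  ∑ η : (Fin d → Fin ℓ) → Bool, (∏ x, if η x then (1 - q) else q) * g η

/-- Variance under the product Bernoulli(1−q) measure. -/
def boxVar (d ℓ : ℕ) (q : ℝ) (g : ((Fin d → Fin ℓ) → Bool) → ℝ) : ℝ :=
  boxExp d ℓ q fun η => (g η - boxExp d ℓ q g) ^ 2

/-! Let `u = ∑_{x ∈ G} uₓ`, `uₓ(η) = 1{all neighbours of x occupied} · (1{η x empty} − q)`.
Resampling the single site `x` shows that `E[g uₓ] = 0` for every `g` not depending on `η x`
(such as `1`, or `u_y` for `y ≠ x` in `G`, whose closed neighbourhood avoids `x`), and that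
`E[g uₓ] = q(1−q)(1−q)^{deg x}` whenever emptying `x` raises `g` by one as soon as all neighbours
of `x` are occupied. Both `uₓ` and the cluster count `f` have this property, the latter because
such an `x` becomes a new one-site cluster. Hence `E[u²] = E[f u] = q(1−q) ∑ₓ (1−q)^{deg x}`,
and `E[(f − E f − u)²] ≥ 0` turns this into `Var f ≥ E[u²]`; finally `deg x ≤ 2d`. -/

section Bernoulli

variable {ι : Type*} [Fintype ι] [DecidableEq ι] (q : ℝ)

def bernoulliExp : ((ι → Bool) → ℝ) →ₗ[ℝ] ℝ where
  toFun g := ∑ η, (∏ x, if η x then 1 - q else q) * g η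
  map_add' f g := by simp only [Pi.add_apply, mul_add, sum_add_distrib]
  map_smul' c g := by
    simp only [Pi.smul_apply, smul_eq_mul, RingHom.id_apply, mul_sum]
    exact sum_congr rfl fun _ _ => mul_left_comm _ _ _

theorem bernoulliExp_apply (g : (ι → Bool) → ℝ) :
    bernoulliExp q g = ∑ η, (∏ x, if η x then 1 - q else q) * g η := rfl

variable {q} in
theorem bernoulliExp_nonneg (hq0 : 0 ≤ q) (hq1 : q ≤ 1) {g : (ι → Bool) → ℝ} (hg : 0 ≤ g) :
    0 ≤ bernoulliExp q g :=
  sum_nonneg fun η _ => mul_nonneg (prod_nonneg fun x _ => by split <;> linarith) (hg η)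

theorem bernoulliExp_resample (x : ι) (F : (ι → Bool) → ℝ) :
    bernoulliExp q F = bernoulliExp q fun η =>
      q * F (Function.update η x false) + (1 - q) * F (Function.update η x true) := by
  let e := (Equiv.funSplitAt x Bool).symm
  have weight : ∀ b ρ, (∏ z, if e (b, ρ) z then 1 - q else q) =
      (if b then 1 - q else q) * ∏ z : {z // z ≠ x}, if ρ z then 1 - q else q := by
    intro b ρ
    rw [Fintype.prod_eq_mul_prod_subtype_ne _ x]
    congr 1
    · simp [e]
    · exact prod_congr rfl fun z _ => by simp [e, z.2]
  have update_split : ∀ b b' ρ, Function.update (e (b, ρ)) x b' = e (b', ρ) := by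
    intro b b' ρ
    ext z
    by_cases hz : z = x <;> simp [e, Equiv.funSplitAt_symm_apply, Function.update, hz]
  simp only [bernoulliExp_apply, ← e.sum_comp, Fintype.sum_prod_type_right, Fintype.sum_bool,
    weight, update_split]
  refine sum_congr rfl fun ρ _ => ?_
  simp only [if_true, Bool.false_eq_true, if_false]
  ring

theorem bernoulliExp_forall_true (S : Finset ι) :
    bernoulliExp q (fun η => if ∀ z ∈ S, η z = true then 1 else 0) = (1 - q) ^ #S := by
  have factor : ∀ η : ι → Bool, (∏ x, if η x then 1 - q else q) *
      (if ∀ z ∈ S, η z = true then 1 else 0) =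
      ∏ z, (if η z then 1 - q else q) * (if z ∈ S then (if η z then 1 else 0) else 1) := by
    intro η
    rw [prod_mul_distrib, Fintype.prod_ite_mem, prod_boole]
    congr
  simp only [bernoulliExp_apply, factor]
  rw [← Fintype.prod_sum (fun z (b : Bool) =>
    (if b then 1 - q else q) * (if z ∈ S then (if b then 1 else 0) else 1)),
    ← prod_const, ← Fintype.prod_ite_mem S]
  refine prod_congr rfl fun z _ => ?_
  split <;> simp

end Bernoulli

theorem LinearMap.map_sq_le_map_sub_const_sq {α : Type*} (E : (α → ℝ) →ₗ[ℝ] ℝ)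
    (hE : ∀ g, 0 ≤ g → 0 ≤ E g) {f u : α → ℝ} (hu : E u = 0) (hfu : E (f * u) = E (u ^ 2))
    (c : ℝ) : E (u ^ 2) ≤ E ((f - fun _ => c) ^ 2) := by
  have expand : (f - (fun _ => c) - u) ^ 2 =
      (f - fun _ => c) ^ 2 - (2 : ℝ) • (f * u) + (2 * c) • u + u ^ 2 := by
    ext η
    simp only [Pi.pow_apply, Pi.sub_apply, Pi.add_apply, Pi.smul_apply, Pi.mul_apply, smul_eq_mul]
    ring
  have hnonneg := hE ((f - (fun _ => c) - u) ^ 2) fun η =>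
    sq_nonneg ((f - (fun _ => c) - u : α → ℝ) η)
  rw [expand, map_add, map_add, map_sub, map_smul, map_smul, hu, hfu] at hnonneg
  simp only [smul_eq_mul] at hnonneg
  linarith

namespace SimpleGraph

variable {V : Type*} {G : SimpleGraph V} {s : Set V} {v : V}

theorem reachable_induce_of_reachable_induce_insert (hv : ∀ w ∈ s, ¬G.Adj v w) {a b : V}
    (ha : a ∈ s) (hb : b ∈ s)
    (h : (G.induce (insert v s)).Reachable ⟨a, .inr ha⟩ ⟨b, .inr hb⟩) :
    (G.induce s).Reachable ⟨a, ha⟩ ⟨b, hb⟩ := by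
  obtain ⟨p⟩ := h
  suffices ∀ {x y : ↥(insert v s)} (p : (G.induce (insert v s)).Walk x y) (hx : x.1 ∈ s)
      (hy : y.1 ∈ s), (G.induce s).Reachable ⟨x, hx⟩ ⟨y, hy⟩ from this p ha hb
  intro x y p
  induction p with
  | nil => exact fun _ _ => .rfl
  | @cons x u y hxu _ ih =>
    intro hx hy
    have hu : u.1 ∈ s := u.2.resolve_left fun huv =>
      hv x hx (by simpa [huv] using (induce_adj.1 hxu).symm)
    have hxu' : (G.induce s).Adj ⟨x, hx⟩ ⟨u, hu⟩ := induce_adj.2 (induce_adj.1 hxu)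
    exact hxu'.reachable.trans (ih hu hy)

theorem card_connectedComponent_induce_insert [Finite V] (hvs : v ∉ s)
    (hv : ∀ w ∈ s, ¬G.Adj v w) :
    Nat.card (G.induce (insert v s)).ConnectedComponent =
      Nat.card (G.induce s).ConnectedComponent + 1 := by
  let v' : ↥(insert v s) := ⟨v, Set.mem_insert v s⟩
  have reachable_v' : ∀ w, (G.induce (insert v s)).Reachable v' w → w = v' := by
    rintro w ⟨_ | ⟨h, _⟩⟩
    · rfl
    · rename_i u _
      have hvu := induce_adj.1 h
      exact (hv u (u.2.resolve_left (G.ne_of_adj hvu).symm) hvu).elim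
  let incl := G.induceHomOfLE (Set.subset_insert v s)
  have mk_incl_ne : ∀ w, (G.induce (insert v s)).connectedComponentMk (incl w) ≠
      connectedComponentMk _ v' := by
    intro w h
    have hwv : w.1 = v := congrArg Subtype.val (reachable_v' _ (ConnectedComponent.exact h).symm)
    exact hvs (hwv ▸ w.2)
  let Φ : Option (G.induce s).ConnectedComponent → (G.induce (insert v s)).ConnectedComponent :=
    fun o => o.elim (connectedComponentMk _ v') (ConnectedComponent.map incl.toHom)
  have hΦ : Function.Bijective Φ := by
    constructor
    · rintro (_ | c) (_ | c') h
      · rfl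
      · induction c' using ConnectedComponent.ind with | h w => exact (mk_incl_ne w h.symm).elim
      · induction c using ConnectedComponent.ind with | h w => exact (mk_incl_ne w h).elim
      · induction c using ConnectedComponent.ind with | h w => ?_
        induction c' using ConnectedComponent.ind with | h w' => ?_
        exact congrArg some (ConnectedComponent.sound
          (reachable_induce_of_reachable_induce_insert hv w.2 w'.2 (ConnectedComponent.exact h)))
    · intro c
      induction c using ConnectedComponent.ind with | h w => ?_
      by_cases hw : w.1 = v
      · exact ⟨none, congrArg _ (Subtype.ext hw.symm)⟩
      · exact ⟨some (connectedComponentMk _ ⟨w, w.2.resolve_left hw⟩), rfl⟩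
  rw [← Nat.card_eq_of_bijective Φ hΦ, Finite.card_option]

end SimpleGraph

section IsolationTest

variable {ι : Type*} (H : SimpleGraph ι)

def componentCount (η : ι → Bool) : ℕ :=
  Nat.card (H.induce {x | η x = false}).ConnectedComponent

theorem componentCount_update_false [Finite ι] [DecidableEq ι] {x : ι} {η : ι → Bool}
    (hx : ∀ z, H.Adj x z → η z = true) :
    componentCount H (Function.update η x false) =
      componentCount H (Function.update η x true) + 1 := by
  have hset : {z | Function.update η x false z = false} =
      insert x {z | Function.update η x true z = false} := by
    ext z
    by_cases hz : z = x <;> simp [hz]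
  unfold componentCount
  rw [hset]
  refine H.card_connectedComponent_induce_insert (by simp) fun w hw hxw => ?_
  have hwx : w ≠ x := (H.ne_of_adj hxw).symm
  simp [Function.update_of_ne hwx, hx w hxw] at hw

variable [Fintype ι] [DecidableRel H.Adj] (q : ℝ)

def neighborsOccupied (x : ι) (η : ι → Bool) : ℝ :=
  if ∀ z ∈ H.neighborFinset x, η z = true then 1 else 0

def isolationTest (x : ι) (η : ι → Bool) : ℝ :=
  neighborsOccupied H x η * if η x then -q else 1 - q

variable [DecidableEq ι]

theorem neighborsOccupied_update {x y : ι} (hyx : ¬H.Adj y x) (η : ι → Bool) (b : Bool) :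
    neighborsOccupied H y (Function.update η x b) = neighborsOccupied H y η := by
  unfold neighborsOccupied
  congr 1
  refine propext (forall₂_congr fun z hz => ?_)
  rw [Function.update_of_ne]
  rintro rfl
  exact hyx ((H.mem_neighborFinset y z).1 hz)

theorem isolationTest_update {x y : ι} (hxy : x ≠ y) (hyx : ¬H.Adj y x) (η : ι → Bool) (b : Bool) :
    isolationTest H q y (Function.update η x b) = isolationTest H q y η := by
  rw [isolationTest, isolationTest, neighborsOccupied_update H hyx, Function.update_of_ne hxy.symm]

theorem bernoulliExp_neighborsOccupied (x : ι) :
    bernoulliExp q (neighborsOccupied H x) = (1 - q) ^ H.degree x := by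
  rw [← H.card_neighborFinset_eq_degree, ← bernoulliExp_forall_true q]
  congr with η
  unfold neighborsOccupied
  congr

theorem bernoulliExp_mul_isolationTest (x : ι) (g : (ι → Bool) → ℝ) :
    bernoulliExp q (g * isolationTest H q x) = bernoulliExp q fun η =>
      q * (1 - q) * neighborsOccupied H x η *
        (g (Function.update η x false) - g (Function.update η x true)) := by
  rw [bernoulliExp_resample q x]
  congr 1
  ext η
  simp only [Pi.mul_apply, isolationTest, neighborsOccupied_update H H.irrefl,
    Function.update_self, Bool.false_eq_true, if_false, if_true]
  ring

theorem bernoulliExp_mul_isolationTest_eq_zero (x : ι) {g : (ι → Bool) → ℝ}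
    (hg : ∀ η, g (Function.update η x false) = g (Function.update η x true)) :
    bernoulliExp q (g * isolationTest H q x) = 0 := by
  simp only [bernoulliExp_mul_isolationTest, hg, sub_self, mul_zero]
  exact map_zero _

theorem bernoulliExp_mul_isolationTest_of_sub_eq_one (x : ι) {g : (ι → Bool) → ℝ}
    (hg : ∀ η, (∀ z ∈ H.neighborFinset x, η z = true) →
      g (Function.update η x false) - g (Function.update η x true) = 1) :
    bernoulliExp q (g * isolationTest H q x) = q * (1 - q) * (1 - q) ^ H.degree x := by
  have hfun : (fun η => q * (1 - q) * neighborsOccupied H x η *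
      (g (Function.update η x false) - g (Function.update η x true))) =
      (q * (1 - q)) • neighborsOccupied H x := by
    ext η
    simp only [neighborsOccupied, Pi.smul_apply, smul_eq_mul]
    split_ifs with hη
    · rw [hg η hη]; ring
    · ring
  rw [bernoulliExp_mul_isolationTest, hfun, map_smul, bernoulliExp_neighborsOccupied, smul_eq_mul]

theorem le_bernoulliExp_componentCount_sub_sq {G : Finset ι} (hG : H.IsIndepSet G)
    (hq0 : 0 ≤ q) (hq1 : q ≤ 1) (c : ℝ) :
    q * (1 - q) * ∑ x ∈ G, (1 - q) ^ H.degree x ≤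
      bernoulliExp q fun η => ((componentCount H η : ℝ) - c) ^ 2 := by
  set f : (ι → Bool) → ℝ := fun η => componentCount H η
  set u := ∑ x ∈ G, isolationTest H q x
  have hu : bernoulliExp q u = 0 := by
    refine (map_sum _ _ _).trans (sum_eq_zero fun x _ => ?_)
    simpa using bernoulliExp_mul_isolationTest_eq_zero H q x (g := 1) fun _ => rfl
  have hfu : bernoulliExp q (f * u) = q * (1 - q) * ∑ x ∈ G, (1 - q) ^ H.degree x := by
    rw [mul_sum, map_sum, mul_sum]
    refine sum_congr rfl fun x _ =>
      bernoulliExp_mul_isolationTest_of_sub_eq_one H q x fun η hη => ?_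
    simp [f, componentCount_update_false H fun z hz => hη z ((H.mem_neighborFinset x z).2 hz)]
  have huu : bernoulliExp q (u ^ 2) = q * (1 - q) * ∑ x ∈ G, (1 - q) ^ H.degree x := by
    rw [sq, sum_mul_sum, map_sum, mul_sum]
    refine sum_congr rfl fun x hx => ?_
    rw [map_sum, sum_eq_single_of_mem x hx]
    · refine bernoulliExp_mul_isolationTest_of_sub_eq_one H q x fun η hη => ?_
      rw [isolationTest, isolationTest, neighborsOccupied_update H H.irrefl,
        neighborsOccupied_update H H.irrefl, show neighborsOccupied H x η = 1 from if_pos hη]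
      simp
    · intro y hy hyx
      exact bernoulliExp_mul_isolationTest_eq_zero H q y fun η => by
        rw [isolationTest_update H q hyx (hG hx hy hyx.symm),
          isolationTest_update H q hyx (hG hx hy hyx.symm)]
  calc q * (1 - q) * ∑ x ∈ G, (1 - q) ^ H.degree x = bernoulliExp q (u ^ 2) := huu.symm
    _ ≤ bernoulliExp q ((f - fun _ => c) ^ 2) :=
      (bernoulliExp q).map_sq_le_map_sub_const_sq (fun _ => bernoulliExp_nonneg hq0 hq1) hu
        (hfu.trans huu.symm) c
    _ = bernoulliExp q fun η => ((componentCount H η : ℝ) - c) ^ 2 := rfl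

end IsolationTest

theorem exists_eq_update_of_sum_abs_sub_eq_one {ι : Type*} [Fintype ι] [DecidableEq ι]
    {a b : ι → ℤ} (h : ∑ i, |a i - b i| = 1) :
    ∃ i, ∃ s ∈ ({1, -1} : Finset ℤ), b = Function.update a i (a i + s) := by
  obtain ⟨i, hi⟩ : ∃ i, a i ≠ b i := by
    by_contra! hab
    simp [hab] at h
  have hi1 : 1 ≤ |a i - b i| := Int.one_le_abs (sub_ne_zero.2 hi)
  have hrest : ∀ j ≠ i, a j = b j := by
    intro j hj
    have hpair := sum_le_sum_of_subset_of_nonneg (subset_univ {i, j})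
      fun k _ _ => abs_nonneg (a k - b k)
    rw [sum_pair hj.symm, h] at hpair
    exact sub_eq_zero.1 (abs_nonpos_iff.1 (by linarith))
  have hi_eq : |a i - b i| = 1 := by
    rw [← h, sum_eq_single i (fun j _ hj => by rw [hrest j hj, sub_self, abs_zero]) (by simp)]
  refine ⟨i, b i - a i, ?_, ?_⟩
  · rcases abs_eq zero_le_one |>.1 hi_eq with h' | h' <;> simp <;> omega
  · ext j
    by_cases hj : j = i
    · subst hj; simp
    · simp [Function.update_of_ne hj, hrest j hj]

def boxGraph (d ℓ : ℕ) : SimpleGraph (Fin d → Fin ℓ) :=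
  SimpleGraph.fromRel fun a b => ∑ i, |(a i : ℤ) - b i| = 1

theorem boxGraph_adj {d ℓ : ℕ} {a b : Fin d → Fin ℓ} :
    (boxGraph d ℓ).Adj a b ↔ ∑ i, |(a i : ℤ) - b i| = 1 := by
  rw [boxGraph, SimpleGraph.fromRel_adj]
  constructor
  · rintro ⟨-, h | h⟩
    · exact h
    · simpa only [abs_sub_comm] using h
  · intro h
    refine ⟨?_, .inl h⟩
    rintro rfl
    simp at h

theorem clusterCount_eq_componentCount {d ℓ : ℕ} (η : (Fin d → Fin ℓ) → Bool) :
    clusterCount η = componentCount (boxGraph d ℓ) η := by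
  have hgraph : emptyClusterGraph η = (boxGraph d ℓ).induce {x | η x = false} := by
    ext a b
    simp [emptyClusterGraph, boxGraph, SimpleGraph.fromRel_adj, Subtype.ext_iff]
  rw [clusterCount, componentCount, hgraph]

theorem boxGraph_degree_le {d ℓ : ℕ} [DecidableRel (boxGraph d ℓ).Adj] (x : Fin d → Fin ℓ) :
    (boxGraph d ℓ).degree x ≤ 2 * d := by
  let toInt : (Fin d → Fin ℓ) → Fin d → ℤ := fun z i => z i
  have toInt_injective : Function.Injective toInt := fun z z' h => funext fun i => by
    have hi : (z i : ℤ) = z' i := congrFun h i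
    exact Fin.ext (by exact_mod_cast hi)
  let steps := ((univ : Finset (Fin d)) ×ˢ ({1, -1} : Finset ℤ)).image fun p =>
    Function.update (toInt x) p.1 (toInt x p.1 + p.2)
  calc (boxGraph d ℓ).degree x = #(((boxGraph d ℓ).neighborFinset x).image toInt) := by
        rw [card_image_of_injective _ toInt_injective, SimpleGraph.card_neighborFinset_eq_degree]
    _ ≤ #steps := by
        refine card_le_card fun _ hz => ?_
        obtain ⟨z, hxz, rfl⟩ := mem_image.1 hz
        obtain ⟨i, s, hs, h⟩ := exists_eq_update_of_sum_abs_sub_eq_one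
          (boxGraph_adj.1 ((SimpleGraph.mem_neighborFinset _ _ _).1 hxz))
        exact mem_image.2 ⟨(i, s), mem_product.2 ⟨mem_univ i, hs⟩, h.symm⟩
    _ ≤ #((univ : Finset (Fin d)) ×ˢ ({1, -1} : Finset ℤ)) := card_image_le
    _ = 2 * d := by simp [mul_comm]

theorem boxGraph_isIndepSet_multiples_three (d ℓ : ℕ) :
    (boxGraph d ℓ).IsIndepSet ↑(univ.filter fun x : Fin d → Fin ℓ => ∀ i, 3 ∣ (x i : ℕ)) := by
  intro x hx y hy _ hxy
  simp only [coe_filter, mem_univ, true_and, Set.mem_ofPred_eq] at hx hy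
  have h3 : (3 : ℤ) ∣ ∑ i, |(x i : ℤ) - y i| := dvd_sum fun i _ =>
    (dvd_abs _ _).2 (dvd_sub (Int.natCast_dvd_natCast.2 (hx i)) (Int.natCast_dvd_natCast.2 (hy i)))
  rw [boxGraph_adj.1 hxy] at h3
  norm_num at h3

theorem var_clusterCount_ge_general (d ℓ : ℕ) (q : ℝ) (hq0 : 0 < q) (hq1 : q < 1) :
    boxVar d ℓ q (fun η => (clusterCount η : ℝ)) ≥
      q * (1 - q) ^ (2 * d + 1) *
        ((Finset.univ.filter fun x : Fin d → Fin ℓ => ∀ i, 3 ∣ (x i : ℕ)).card : ℝ) := by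
  classical
  set grid := univ.filter fun x : Fin d → Fin ℓ => ∀ i, 3 ∣ (x i : ℕ)
  have hvar := le_bernoulliExp_componentCount_sub_sq (boxGraph d ℓ) q
    (boxGraph_isIndepSet_multiples_three d ℓ) hq0.le hq1.le
    (boxExp d ℓ q fun η => (clusterCount η : ℝ))
  simp only [← clusterCount_eq_componentCount] at hvar
  calc q * (1 - q) ^ (2 * d + 1) * #grid = q * (1 - q) * ∑ x ∈ grid, (1 - q) ^ (2 * d) := by
        rw [sum_const, nsmul_eq_mul]; ring
    _ ≤ q * (1 - q) * ∑ x ∈ grid, (1 - q) ^ (boxGraph d ℓ).degree x := by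
        refine mul_le_mul_of_nonneg_left (sum_le_sum fun x _ => ?_) (by nlinarith)
        exact pow_le_pow_of_le_one (by linarith) (by linarith) (boxGraph_degree_le x)
    -- `boxExp d ℓ q` is `bernoulliExp q` by definition
    _ ≤ boxVar d ℓ q (fun η => (clusterCount η : ℝ)) := hvar

/-- the variance of the cluster-count function is at least
`q(1−q)^{2d+1} · |3ℤ^d ∩ Λ|`. -/
theorem var_clusterCount_ge (d ℓ : ℕ) (hd : 1 ≤ d) (q : ℝ) (hq0 : 0 < q) (hq1 : q < 1) :
    boxVar d ℓ q (fun η => (clusterCount η : ℝ)) ≥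
      q * (1 - q) ^ (2 * d + 1) *
        ((Finset.univ.filter fun x : Fin d → Fin ℓ => ∀ i, 3 ∣ (x i : ℕ)).card : ℝ) :=
  var_clusterCount_ge_general d ℓ q hq0 hq1

end
end

section
/- Let d ≥ 3. The spectral gap of the FA1f model on ℤ^d satisfies gap(L) ≤ C q² for small q, where C depends only on d. -/
open Finset

noncomputable section

/-- The configuration `η` flipped at the site `x`. -/
def flipCfg {d : ℕ} (η : (Fin d → ℤ) → Bool) (x : Fin d → ℤ) : (Fin d → ℤ) → Bool :=
  fun y => if y = x then !(η y) else η y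

/-- The nearest neighbours of a site `x ∈ ℤ^d`. -/
def latNbrs {d : ℕ} (x : Fin d → ℤ) : Finset (Fin d → ℤ) :=
  Finset.univ.biUnion fun i : Fin d =>
    {Function.update x i (x i + 1), Function.update x i (x i - 1)}

/-- Extension of a configuration on a finite set of sites by fully occupied outside. -/
def extendCfg {d : ℕ} (s : Finset (Fin d → ℤ)) (η : ↥s → Bool) : (Fin d → ℤ) → Bool :=
  fun x => if h : x ∈ s then η ⟨x, h⟩ else true

/-- Expectation, under the product Bernoulli(1−q) measure (`true` = occupied, probability
`1−q`; `false` = empty, probability `q`), of a function depending only on the sites in the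
finite set `s`. -/
def Eloc {d : ℕ} (q : ℝ) (s : Finset (Fin d → ℤ)) (g : ((Fin d → ℤ) → Bool) → ℝ) : ℝ :=
  ∑ η : ↥s → Bool, (∏ v : ↥s, if η v then (1 - q) else q) * g (extendCfg s η)

/-- The FA1f constraint at `x` (as a real indicator): some nearest neighbour of `x` is empty. -/
def cInd {d : ℕ} (η : (Fin d → ℤ) → Bool) (x : Fin d → ℤ) : ℝ :=
  if ∃ y ∈ latNbrs x, η y = false then 1 else 0

/-- The FA1f Dirichlet form `D(f) = q(1−q) Σ_x μ(c_x (f(η^x) − f(η))²)` of a function `f`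
depending only on the sites in the finite set `s`. -/
def Dform {d : ℕ} (q : ℝ) (s : Finset (Fin d → ℤ)) (f : ((Fin d → ℤ) → Bool) → ℝ) : ℝ :=
  q * (1 - q) * ∑' x : Fin d → ℤ,
    Eloc q (s ∪ insert x (latNbrs x))
      (fun η => cInd η x * (f (flipCfg η x) - f η) ^ 2)

/-- `f` depends only on the sites in `s`. -/
def localOn {d : ℕ} (s : Finset (Fin d → ℤ)) (f : ((Fin d → ℤ) → Bool) → ℝ) : Prop :=
  ∀ η η' : (Fin d → ℤ) → Bool, (∀ x ∈ s, η x = η' x) → f η = f η'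

/-- Variance of a function depending only on the sites in `s`. -/
def Varloc {d : ℕ} (q : ℝ) (s : Finset (Fin d → ℤ)) (f : ((Fin d → ℤ) → Bool) → ℝ) : ℝ :=
  Eloc q s fun η => (f η - Eloc q s f) ^ 2

/-- The spectral gap of the FA1f model on `ℤ^d`, via its variational characterization
`gap(L) = inf_f D(f)/Var_μ(f)` over local non-constant functions `f`. -/
def gapFA (d : ℕ) (q : ℝ) : ℝ :=
  sInf {r : ℝ | ∃ (s : Finset (Fin d → ℤ)) (f : ((Fin d → ℤ) → Bool) → ℝ),
    localOn s f ∧ Varloc q s f ≠ 0 ∧ r = Dform q s f / Varloc q s f}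

/-!
Test function: `F` = (vacancies) − (adjacent vacant pairs) in a box `Λ` of side `L = ⌈1/q⌉`,
which to first order in `q` counts vacancy clusters. Flipping a site `z` changes `F` by
`±(1 − #{empty neighbours of z in Λ})`, so an allowed flip (some empty neighbour) costs something
only if `z` has two empty neighbours (probability `O(q²)`) or an empty neighbour outside `Λ`:
`D(F) ≤ C q (q² |Λ| + q |∂Λ|)`. On the other hand `Var F ≥ |Λ| q (1 - q) / 2`, from the
covariance of `F` with the centred number of vacancies, each vacancy contributing `q (1 - q)`
up to `O(q²)` corrections from pairs. Since `|∂Λ| ≤ 2d L^(d-1) ≤ 2d q |Λ|`, `D(F)/Var F = O(q²)`.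
-/

namespace FA1f

variable {d : ℕ}

def vacancy (η : (Fin d → ℤ) → Bool) (x : Fin d → ℤ) : ℝ := if η x then 0 else 1

def allVacant (η : (Fin d → ℤ) → Bool) (T : Finset (Fin d → ℤ)) : ℝ := ∏ x ∈ T, vacancy η x

lemma vacancy_nonneg (η : (Fin d → ℤ) → Bool) (x : Fin d → ℤ) : 0 ≤ vacancy η x := by
  unfold vacancy; split <;> norm_num

lemma allVacant_insert (η : (Fin d → ℤ) → Bool) (x : Fin d → ℤ) (T : Finset (Fin d → ℤ)) :
    allVacant η (insert x T) = allVacant η T * vacancy η x := by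
  by_cases hx : x ∈ T
  · rw [insert_eq_of_mem hx]
    cases h : η x
    · simp [vacancy, h]
    · simp [allVacant, vacancy, h, prod_eq_zero hx]
  · rw [allVacant, prod_insert hx, mul_comm, allVacant]

lemma allVacant_singleton (η : (Fin d → ℤ) → Bool) (x : Fin d → ℤ) :
    allVacant η {x} = vacancy η x := prod_singleton _ _

lemma allVacant_pair (η : (Fin d → ℤ) → Bool) (x y : Fin d → ℤ) :
    allVacant η {x, y} = vacancy η x * vacancy η y := by
  rw [allVacant_insert, allVacant_singleton, mul_comm]

section Expectation

variable (q : ℝ) (u : Finset (Fin d → ℤ))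

lemma Eloc_add (g h : ((Fin d → ℤ) → Bool) → ℝ) :
    Eloc q u (fun η => g η + h η) = Eloc q u g + Eloc q u h := by
  simp only [Eloc, mul_add, sum_add_distrib]

lemma Eloc_sub (g h : ((Fin d → ℤ) → Bool) → ℝ) :
    Eloc q u (fun η => g η - h η) = Eloc q u g - Eloc q u h := by
  simp only [Eloc, mul_sub, sum_sub_distrib]

lemma Eloc_const_mul (c : ℝ) (g : ((Fin d → ℤ) → Bool) → ℝ) :
    Eloc q u (fun η => c * g η) = c * Eloc q u g := by
  simp only [Eloc, mul_sum, mul_left_comm]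

lemma Eloc_sum {ι : Type*} (A : Finset ι) (g : ι → ((Fin d → ℤ) → Bool) → ℝ) :
    Eloc q u (fun η => ∑ i ∈ A, g i η) = ∑ i ∈ A, Eloc q u (g i) := by
  simp only [Eloc, mul_sum]
  exact sum_comm

lemma Eloc_prod (φ : (Fin d → ℤ) → Bool → ℝ) :
    Eloc q u (fun η => ∏ y ∈ u, φ y (η y)) = ∏ y ∈ u, ((1 - q) * φ y true + q * φ y false) := by
  have hext (η : ↥u → Bool) : ∏ y ∈ u, φ y (extendCfg u η y) = ∏ v : ↥u, φ v (η v) := by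
    rw [← prod_coe_sort]
    exact prod_congr rfl fun v _ => by rw [extendCfg, dif_pos v.2]
  simp only [Eloc, hext, ← prod_mul_distrib, ← prod_coe_sort u fun y =>
    (1 - q) * φ y true + q * φ y false]
  rw [← Fintype.prod_sum fun (v : ↥u) (b : Bool) => (if b then 1 - q else q) * φ v b]
  simp

lemma Eloc_allVacant {T : Finset (Fin d → ℤ)} (hT : T ⊆ u) :
    Eloc q u (fun η => allVacant η T) = q ^ #T := by
  set φ : (Fin d → ℤ) → Bool → ℝ := fun y b => if y ∈ T then (if b then 0 else 1) else 1
  have hloc : (fun η => allVacant η T) = fun η => ∏ y ∈ u, φ y (η y) := by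
    ext η
    rw [prod_ite_mem, inter_eq_right.mpr hT, allVacant]
    rfl
  rw [hloc]
  calc Eloc q u (fun η => ∏ y ∈ u, φ y (η y))
      = ∏ y ∈ u, if y ∈ T then q else 1 := by
        rw [Eloc_prod]
        exact prod_congr rfl fun y _ => by by_cases hy : y ∈ T <;> simp [φ, hy]
    _ = q ^ #T := by rw [prod_ite_mem, inter_eq_right.mpr hT, prod_const]

lemma Eloc_const (c : ℝ) : Eloc q u (fun _ => c) = c := by
  have h := Eloc_const_mul q u c fun η => allVacant η ∅
  rw [Eloc_allVacant q u (empty_subset u), card_empty, pow_zero, mul_one] at h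
  simpa [allVacant] using h

lemma Eloc_vacancy {x : Fin d → ℤ} (hx : x ∈ u) : Eloc q u (fun η => vacancy η x) = q := by
  simpa [allVacant_singleton] using Eloc_allVacant q u (singleton_subset_iff.mpr hx)

variable {q}

lemma Eloc_mono (hq0 : 0 ≤ q) (hq1 : q ≤ 1) {g h : ((Fin d → ℤ) → Bool) → ℝ}
    (hgh : ∀ η, g η ≤ h η) : Eloc q u g ≤ Eloc q u h :=
  sum_le_sum fun _ _ => mul_le_mul_of_nonneg_left (hgh _)
    (prod_nonneg fun _ _ => by split <;> linarith)

lemma Eloc_nonneg (hq0 : 0 ≤ q) (hq1 : q ≤ 1) {g : ((Fin d → ℤ) → Bool) → ℝ}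
    (hg : ∀ η, 0 ≤ g η) : 0 ≤ Eloc q u g := by
  simpa [Eloc_const] using Eloc_mono u hq0 hq1 (g := fun _ => 0) hg

/-- Expanding `0 ≤ E[(g - E g - h)²]`: a scale-dependent form of `Var g ≥ Cov(g, h)² / Var h`. -/
lemma two_mul_Eloc_mul_sub_le_Varloc (hq0 : 0 ≤ q) (hq1 : q ≤ 1)
    (g h : ((Fin d → ℤ) → Bool) → ℝ) (hh : Eloc q u h = 0) :
    2 * Eloc q u (fun η => g η * h η) - Eloc q u (fun η => h η ^ 2) ≤ Varloc q u g := by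
  have hsq := Eloc_nonneg u hq0 hq1 fun η => sq_nonneg (g η - Eloc q u g - h η)
  have hexp : (fun η => (g η - Eloc q u g - h η) ^ 2) = fun η =>
      (g η - Eloc q u g) ^ 2 - 2 * (g η * h η) + 2 * Eloc q u g * h η + h η ^ 2 := by
    ext η; ring
  rw [hexp, Eloc_add, Eloc_add, Eloc_sub, Eloc_const_mul, Eloc_const_mul, hh] at hsq
  rw [Varloc]
  linarith

end Expectation

section Moments

variable (q : ℝ) (s : Finset (Fin d → ℤ))

lemma Eloc_allVacant_mul_centered {u T : Finset (Fin d → ℤ)} (hT : T ⊆ u) {v : Fin d → ℤ}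
    (hv : v ∈ u) :
    Eloc q u (fun η => allVacant η T * (vacancy η v - q)) =
      if v ∈ T then q ^ #T * (1 - q) else 0 := by
  have hexp : (fun η => allVacant η T * (vacancy η v - q)) =
      fun η => allVacant η (insert v T) - q * allVacant η T := by
    ext η; rw [allVacant_insert]; ring
  rw [hexp, Eloc_sub, Eloc_const_mul, Eloc_allVacant q u (insert_subset hv hT),
    Eloc_allVacant q u hT]
  split_ifs with h
  · rw [insert_eq_of_mem h]; ring
  · rw [card_insert_of_notMem h]; ring

def centeredVacancies (η : (Fin d → ℤ) → Bool) : ℝ := ∑ v ∈ s, (vacancy η v - q)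

lemma Eloc_allVacant_mul_centeredVacancies {T : Finset (Fin d → ℤ)} (hT : T ⊆ s) :
    Eloc q s (fun η => allVacant η T * centeredVacancies q s η) = #T * (q ^ #T * (1 - q)) := by
  simp only [centeredVacancies, mul_sum]
  rw [Eloc_sum, sum_congr rfl fun v hv => Eloc_allVacant_mul_centered q hT hv, sum_ite_mem,
    inter_eq_right.mpr hT, sum_const, nsmul_eq_mul]

lemma Eloc_centeredVacancies : Eloc q s (centeredVacancies q s) = 0 := by
  simpa [allVacant] using Eloc_allVacant_mul_centeredVacancies q s (empty_subset s)

lemma Eloc_vacancy_mul_centeredVacancies {x : Fin d → ℤ} (hx : x ∈ s) :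
    Eloc q s (fun η => vacancy η x * centeredVacancies q s η) = q * (1 - q) := by
  simpa [allVacant_singleton] using
    Eloc_allVacant_mul_centeredVacancies q s (singleton_subset_iff.mpr hx)

lemma Eloc_centeredVacancies_sq :
    Eloc q s (fun η => centeredVacancies q s η ^ 2) = #s * (q * (1 - q)) := by
  have hexp : (fun η => centeredVacancies q s η ^ 2) = fun η =>
      ∑ v ∈ s, (vacancy η v * centeredVacancies q s η - q * centeredVacancies q s η) := by
    ext η
    rw [sq]
    conv_lhs => arg 1; rw [centeredVacancies]
    rw [sum_mul]
    exact sum_congr rfl fun v _ => sub_mul _ _ _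
  rw [hexp, Eloc_sum, sum_congr rfl fun v hv => by
    rw [Eloc_sub, Eloc_const_mul, Eloc_vacancy_mul_centeredVacancies q s hv,
      Eloc_centeredVacancies, mul_zero, sub_zero], sum_const, nsmul_eq_mul]

lemma Eloc_sq_sub_sum_vacancy {u A : Finset (Fin d → ℤ)} (hA : A ⊆ u) :
    Eloc q u (fun η => (∑ y ∈ A, vacancy η y) ^ 2 - ∑ y ∈ A, vacancy η y) =
      (#A ^ 2 - #A) * q ^ 2 := by
  have hpair : ∀ y ∈ A, ∀ y' ∈ A, Eloc q u (fun η => vacancy η y * vacancy η y') =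
      q ^ 2 + if y = y' then q - q ^ 2 else 0 := by
    intro y hy y' hy'
    simp only [← allVacant_pair]
    rw [Eloc_allVacant q u (insert_subset (hA hy) (singleton_subset_iff.mpr (hA hy')))]
    by_cases h : y = y' <;> simp [h]
  have hexp : (fun η => (∑ y ∈ A, vacancy η y) ^ 2 - ∑ y ∈ A, vacancy η y) = fun η =>
      ∑ y ∈ A, ∑ y' ∈ A, vacancy η y * vacancy η y' - ∑ y ∈ A, vacancy η y := by
    ext η; rw [sq, sum_mul_sum]
  rw [hexp, Eloc_sub, Eloc_sum, Eloc_sum, sum_congr rfl fun y hy => by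
    rw [Eloc_sum, sum_congr rfl (hpair y hy)], sum_congr rfl fun y hy => Eloc_vacancy q u (hA hy)]
  simp only [sum_add_distrib, sum_const, sum_ite_eq, nsmul_eq_mul]
  rw [sum_congr rfl fun y hy => if_pos hy, sum_const, nsmul_eq_mul]
  ring

end Moments

section Lattice

lemma mem_latNbrs {x y : Fin d → ℤ} :
    y ∈ latNbrs x ↔
      ∃ i, y = Function.update x i (x i + 1) ∨ y = Function.update x i (x i - 1) := by
  simp [latNbrs]

lemma notMem_latNbrs_self (x : Fin d → ℤ) : x ∉ latNbrs x := by
  intro h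
  obtain ⟨i, h | h⟩ := mem_latNbrs.mp h <;>
  · have := congrFun h i
    simp only [Function.update_self] at this
    omega

lemma mem_latNbrs_symm {x y : Fin d → ℤ} (h : y ∈ latNbrs x) : x ∈ latNbrs y := by
  obtain ⟨i, rfl | rfl⟩ := mem_latNbrs.mp h
  · refine mem_latNbrs.mpr ⟨i, Or.inr ?_⟩
    ext j; rcases eq_or_ne j i with rfl | hj <;> simp [*]
  · refine mem_latNbrs.mpr ⟨i, Or.inl ?_⟩
    ext j; rcases eq_or_ne j i with rfl | hj <;> simp [*]

lemma card_latNbrs_le (x : Fin d → ℤ) : #(latNbrs x) ≤ 2 * d :=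
  card_biUnion_le.trans <| (sum_le_sum fun _ _ => card_le_two).trans <| by simp [mul_comm]

end Lattice

section ClusterCount

variable {s : Finset (Fin d → ℤ)} {z : Fin d → ℤ}

/-- Each adjacent vacant pair occurs twice in the double sum. -/
def clusterCount (s : Finset (Fin d → ℤ)) (η : (Fin d → ℤ) → Bool) : ℝ :=
  ∑ x ∈ s, vacancy η x - (∑ x ∈ s, ∑ y ∈ latNbrs x ∩ s, vacancy η x * vacancy η y) / 2

lemma clusterCount_localOn (s : Finset (Fin d → ℤ)) : localOn s (clusterCount s) := by
  intro η η' h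
  have hv : ∀ x ∈ s, vacancy η x = vacancy η' x := fun x hx => by rw [vacancy, vacancy, h x hx]
  simp only [clusterCount]
  rw [sum_congr rfl hv, sum_congr rfl fun x hx => sum_congr rfl fun y hy => by
    rw [hv x hx, hv y (mem_inter.mp hy).2]]

lemma vacancy_update (η : (Fin d → ℤ) → Bool) (z x : Fin d → ℤ) (b : Bool) :
    vacancy (Function.update η z b) x = if x = z then (if b then 0 else 1) else vacancy η x := by
  by_cases h : x = z <;> simp [vacancy, h]

lemma clusterCount_update_sub (hz : z ∈ s) (η : (Fin d → ℤ) → Bool) :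
    clusterCount s (Function.update η z false) - clusterCount s (Function.update η z true) =
      1 - ∑ y ∈ latNbrs z ∩ s, vacancy η y := by
  set η₀ := Function.update η z false
  set η₁ := Function.update η z true
  have hsingle : ∑ x ∈ s, vacancy η₀ x - ∑ x ∈ s, vacancy η₁ x = 1 := by
    rw [← sum_sub_distrib, sum_congr rfl fun x _ => (show vacancy η₀ x - vacancy η₁ x =
      if x = z then 1 else 0 by by_cases h : x = z <;> simp [η₀, η₁, vacancy_update, h]),
      sum_ite_eq' s z, if_pos hz]
  have hpair : ∀ x ∈ s, ∀ y ∈ latNbrs x ∩ s,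
      vacancy η₀ x * vacancy η₀ y - vacancy η₁ x * vacancy η₁ y =
        (if x = z then vacancy η y else 0) + (if y = z then vacancy η x else 0) := by
    intro x _ y hy
    have hxy : x ≠ y := fun h => notMem_latNbrs_self y (h ▸ (mem_inter.mp hy).1)
    by_cases hx : x = z <;> by_cases hy' : y = z <;> simp_all [η₀, η₁, vacancy_update]
  have hpairs : (∑ x ∈ s, ∑ y ∈ latNbrs x ∩ s, vacancy η₀ x * vacancy η₀ y) -
      ∑ x ∈ s, ∑ y ∈ latNbrs x ∩ s, vacancy η₁ x * vacancy η₁ y =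
        2 * ∑ y ∈ latNbrs z ∩ s, vacancy η y := by
    simp only [← sum_sub_distrib]
    rw [sum_congr rfl fun x hx => sum_congr rfl (hpair x hx)]
    simp only [sum_add_distrib, sum_ite_irrel, sum_const_zero, sum_ite_eq', mem_inter, hz,
      and_true, ↓reduceIte]
    have hsymm : ∑ x ∈ s, (if z ∈ latNbrs x then vacancy η x else 0) =
        ∑ x ∈ latNbrs z ∩ s, vacancy η x := by
      rw [inter_comm, ← sum_ite_mem]
      exact sum_congr rfl fun x _ => if_congr ⟨mem_latNbrs_symm, mem_latNbrs_symm⟩ rfl rfl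
    rw [hsymm]
    ring
  simp only [clusterCount]
  linarith

lemma sq_sub_flipCfg (f : ((Fin d → ℤ) → Bool) → ℝ) (η : (Fin d → ℤ) → Bool) (z : Fin d → ℤ) :
    (f (flipCfg η z) - f η) ^ 2 =
      (f (Function.update η z false) - f (Function.update η z true)) ^ 2 := by
  have hflip : flipCfg η z = Function.update η z (!η z) := by
    funext y; by_cases h : y = z <;> simp [flipCfg, h]
  have hη : Function.update η z (η z) = η := Function.update_eq_self z η
  rcases h : η z <;> rw [h] at hη
  · rw [hflip, h, Bool.not_false, hη]; ring
  · rw [hflip, h, Bool.not_true, hη]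

lemma cInd_mul_sq_le (η : (Fin d → ℤ) → Bool) (z : Fin d → ℤ) (s : Finset (Fin d → ℤ)) :
    cInd η z * (1 - ∑ y ∈ latNbrs z ∩ s, vacancy η y) ^ 2 ≤
      (∑ y ∈ latNbrs z ∩ s, vacancy η y) ^ 2 - ∑ y ∈ latNbrs z ∩ s, vacancy η y +
        ∑ y ∈ latNbrs z \ s, vacancy η y := by
  set S := ∑ y ∈ latNbrs z ∩ s, vacancy η y
  have hR : 0 ≤ ∑ y ∈ latNbrs z \ s, vacancy η y := sum_nonneg fun y _ => vacancy_nonneg η y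
  have hc : 0 ≤ cInd η z ∧ cInd η z ≤ 1 := by unfold cInd; split <;> norm_num
  by_cases hin : ∃ y ∈ latNbrs z ∩ s, η y = false
  · obtain ⟨y, hy, hyf⟩ := hin
    have hS : 1 ≤ S := by
      have hy1 : vacancy η y = 1 := by simp [vacancy, hyf]
      exact hy1 ▸ single_le_sum (fun y _ => vacancy_nonneg η y) hy
    nlinarith
  · push Not at hin
    have hS : S = 0 := sum_eq_zero fun y hy => by simp [vacancy, hin y hy]
    have hcR : cInd η z ≤ ∑ y ∈ latNbrs z \ s, vacancy η y := by
      unfold cInd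
      split_ifs with h
      · obtain ⟨y, hy, hyf⟩ := h
        have hys : y ∉ s := fun hys => by simp [hin y (mem_inter.mpr ⟨hy, hys⟩)] at hyf
        have hy1 : vacancy η y = 1 := by simp [vacancy, hyf]
        exact hy1 ▸ single_le_sum (fun y _ => vacancy_nonneg η y) (mem_sdiff.mpr ⟨hy, hys⟩)
      · exact hR
    rw [hS]
    linarith

end ClusterCount

section TestFunction

variable {q : ℝ} {s : Finset (Fin d → ℤ)}

lemma Eloc_cInd_mul_sq_clusterCount_le (hq0 : 0 ≤ q) (hq1 : q ≤ 1) {z : Fin d → ℤ}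
    (hz : z ∈ s) :
    Eloc q (s ∪ insert z (latNbrs z))
        (fun η => cInd η z * (clusterCount s (flipCfg η z) - clusterCount s η) ^ 2) ≤
      (2 * d) ^ 2 * q ^ 2 + #(latNbrs z \ s) * q := by
  set u := s ∪ insert z (latNbrs z)
  have hN : latNbrs z ⊆ u := fun y hy => mem_union_right _ (mem_insert_of_mem hy)
  have hA : (#(latNbrs z ∩ s) : ℝ) ≤ 2 * d := by
    exact_mod_cast (card_le_card inter_subset_left).trans (card_latNbrs_le z)
  calc _ ≤ Eloc q u (fun η => ((∑ y ∈ latNbrs z ∩ s, vacancy η y) ^ 2 -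
          ∑ y ∈ latNbrs z ∩ s, vacancy η y) + ∑ y ∈ latNbrs z \ s, vacancy η y) :=
        Eloc_mono u hq0 hq1 fun η => by
          rw [sq_sub_flipCfg, clusterCount_update_sub hz]
          exact cInd_mul_sq_le η z s
    _ = (#(latNbrs z ∩ s) ^ 2 - #(latNbrs z ∩ s)) * q ^ 2 + #(latNbrs z \ s) * q := by
        rw [Eloc_add, Eloc_sq_sub_sum_vacancy q (inter_subset_left.trans hN), Eloc_sum,
          sum_congr rfl fun y hy => Eloc_vacancy q u (hN (mem_sdiff.mp hy).1), sum_const,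
          nsmul_eq_mul]
    _ ≤ _ := by
        have hk : (#(latNbrs z ∩ s) : ℝ) ^ 2 - #(latNbrs z ∩ s) ≤ (2 * d) ^ 2 := by
          nlinarith [(#(latNbrs z ∩ s)).cast_nonneg (α := ℝ)]
        nlinarith [mul_le_mul_of_nonneg_right hk (sq_nonneg q)]

lemma Dform_eq_sum_of_localOn {f : ((Fin d → ℤ) → Bool) → ℝ} (hf : localOn s f) :
    Dform q s f = q * (1 - q) * ∑ z ∈ s,
      Eloc q (s ∪ insert z (latNbrs z)) (fun η => cInd η z * (f (flipCfg η z) - f η) ^ 2) := by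
  rw [Dform, tsum_eq_sum fun z hz => ?_]
  have hfix : ∀ η, f (flipCfg η z) = f η := fun η =>
    hf _ _ fun y hy => by simp only [flipCfg, if_neg (ne_of_mem_of_not_mem hy hz)]
  simp [hfix, Eloc_const]

lemma Dform_nonneg (hq0 : 0 ≤ q) (hq1 : q ≤ 1) (s : Finset (Fin d → ℤ))
    (f : ((Fin d → ℤ) → Bool) → ℝ) : 0 ≤ Dform q s f :=
  mul_nonneg (mul_nonneg hq0 (sub_nonneg.mpr hq1)) <| tsum_nonneg fun _ =>
    Eloc_nonneg _ hq0 hq1 fun _ => mul_nonneg (by unfold cInd; split <;> norm_num) (sq_nonneg _)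

def boundaryEdgeCount (s : Finset (Fin d → ℤ)) : ℕ := ∑ z ∈ s, #(latNbrs z \ s)

lemma Dform_clusterCount_le (hq0 : 0 ≤ q) (hq1 : q ≤ 1) :
    Dform q s (clusterCount s) ≤
      q * (1 - q) * (#s * ((2 * d) ^ 2 * q ^ 2) + boundaryEdgeCount s * q) := by
  rw [Dform_eq_sum_of_localOn (clusterCount_localOn s)]
  refine mul_le_mul_of_nonneg_left ?_ (mul_nonneg hq0 (sub_nonneg.mpr hq1))
  refine (sum_le_sum fun z hz => Eloc_cInd_mul_sq_clusterCount_le hq0 hq1 hz).trans_eq ?_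
  simp [boundaryEdgeCount, sum_add_distrib, sum_mul]

lemma Eloc_clusterCount_mul_centeredVacancies_ge (hq1 : q ≤ 1) :
    #s * (q * (1 - q)) * (1 - 2 * d * q) ≤
      Eloc q s (fun η => clusterCount s η * centeredVacancies q s η) := by
  set H := centeredVacancies q s
  have hpair : ∀ x ∈ s, ∀ y ∈ latNbrs x ∩ s,
      Eloc q s (fun η => vacancy η x * vacancy η y * H η) = 2 * (q ^ 2 * (1 - q)) := by
    intro x hx y hy
    have hxy : x ≠ y := fun h => notMem_latNbrs_self y (h ▸ (mem_inter.mp hy).1)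
    simp only [← allVacant_pair]
    rw [Eloc_allVacant_mul_centeredVacancies q s
      (insert_subset hx (singleton_subset_iff.mpr (mem_inter.mp hy).2)), card_pair hxy]
    norm_num
  have hexp : (fun η => clusterCount s η * H η) = fun η => ∑ x ∈ s, vacancy η x * H η -
      1 / 2 * ∑ x ∈ s, ∑ y ∈ latNbrs x ∩ s, vacancy η x * vacancy η y * H η := by
    ext η; simp only [clusterCount, sub_mul, div_mul_eq_mul_div, sum_mul]; ring
  have hdeg : ∑ x ∈ s, (#(latNbrs x ∩ s) : ℝ) ≤ #s * (2 * d) := by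
    have := sum_le_sum fun x (_ : x ∈ s) => (show (#(latNbrs x ∩ s) : ℝ) ≤ 2 * d by
      exact_mod_cast (card_le_card inter_subset_left).trans (card_latNbrs_le x))
    simpa [mul_comm] using this
  have hsingles : Eloc q s (fun η => ∑ x ∈ s, vacancy η x * H η) = #s * (q * (1 - q)) := by
    rw [Eloc_sum, sum_congr rfl fun x hx => Eloc_vacancy_mul_centeredVacancies q s hx,
      sum_const, nsmul_eq_mul]
  have hpairs : Eloc q s (fun η => ∑ x ∈ s, ∑ y ∈ latNbrs x ∩ s, vacancy η x * vacancy η y * H η)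
      = (∑ x ∈ s, (#(latNbrs x ∩ s) : ℝ)) * (2 * (q ^ 2 * (1 - q))) := by
    rw [Eloc_sum, sum_mul]
    refine sum_congr rfl fun x hx => ?_
    rw [Eloc_sum, sum_congr rfl (hpair x hx), sum_const, nsmul_eq_mul]
  rw [hexp, Eloc_sub, Eloc_const_mul, hsingles, hpairs]
  nlinarith [mul_le_mul_of_nonneg_right hdeg (mul_nonneg (sq_nonneg q) (sub_nonneg.mpr hq1))]

lemma Varloc_clusterCount_ge (hq0 : 0 ≤ q) (hq1 : q ≤ 1) :
    #s * (q * (1 - q)) * (1 - 4 * d * q) ≤ Varloc q s (clusterCount s) := by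
  have h := two_mul_Eloc_mul_sub_le_Varloc s hq0 hq1 (clusterCount s) _
    (Eloc_centeredVacancies q s)
  rw [Eloc_centeredVacancies_sq] at h
  linarith [Eloc_clusterCount_mul_centeredVacancies_ge (s := s) hq1]

lemma gapFA_le_div (hq0 : 0 ≤ q) (hq1 : q ≤ 1) {f : ((Fin d → ℤ) → Bool) → ℝ}
    (hf : localOn s f) (hV : Varloc q s f ≠ 0) : gapFA d q ≤ Dform q s f / Varloc q s f :=
  csInf_le ⟨0, by
    rintro _ ⟨s', f', -, -, rfl⟩
    exact div_nonneg (Dform_nonneg hq0 hq1 s' f') (Eloc_nonneg s' hq0 hq1 fun _ => sq_nonneg _)⟩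
    ⟨s, f, hf, hV, rfl⟩

lemma gapFA_le_of_boundaryEdgeCount_le (hq0 : 0 < q) (hq1 : q < 1) (hdq : 8 * d * q ≤ 1)
    (hs : s.Nonempty) (hbd : (boundaryEdgeCount s : ℝ) ≤ 2 * d * q * #s) :
    gapFA d q ≤ (8 * d ^ 2 + 4 * d) * q ^ 2 := by
  have hvol : 0 < (#s : ℝ) * (q * (1 - q)) := by
    have : (0 : ℝ) < #s := by exact_mod_cast hs.card_pos
    have : 0 < q * (1 - q) := mul_pos hq0 (sub_pos.mpr hq1)
    positivity
  have hV : #s * (q * (1 - q)) / 2 ≤ Varloc q s (clusterCount s) := by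
    nlinarith [Varloc_clusterCount_ge (s := s) hq0.le hq1.le]
  have hVpos : 0 < Varloc q s (clusterCount s) := by linarith
  have hD := Dform_clusterCount_le (s := s) hq0.le hq1.le
  calc gapFA d q ≤ Dform q s (clusterCount s) / Varloc q s (clusterCount s) :=
        gapFA_le_div hq0.le hq1.le (clusterCount_localOn s) hVpos.ne'
    _ ≤ _ := by
        rw [div_le_iff₀ hVpos]
        have hqq : 0 ≤ q * (1 - q) := by nlinarith
        nlinarith [mul_le_mul_of_nonneg_left hbd (mul_nonneg hqq hq0.le),
          mul_le_mul_of_nonneg_left hV (by positivity : (0 : ℝ) ≤ (8 * d ^ 2 + 4 * d) * q ^ 2)]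

end TestFunction

section Box

def box (d L : ℕ) : Finset (Fin d → ℤ) := Fintype.piFinset fun _ => Ico 0 (L : ℤ)

lemma card_box (L : ℕ) : #(box d L) = L ^ d := by simp [box]

lemma latNbrs_sdiff_box_subset {L : ℕ} {z : Fin d → ℤ} (hz : z ∈ box d L) :
    latNbrs z \ box d L ⊆
      (univ.filter fun i => z i = L - 1).image (fun i => Function.update z i (z i + 1)) ∪
        (univ.filter fun i => z i = 0).image (fun i => Function.update z i (z i - 1)) := by
  intro y hy
  obtain ⟨hyN, hyout⟩ := mem_sdiff.mp hy
  simp only [box, Fintype.mem_piFinset, mem_Ico] at hz hyout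
  obtain ⟨i, rfl | rfl⟩ := mem_latNbrs.mp hyN
  · refine mem_union_left _ (mem_image.mpr ⟨i, mem_filter.mpr ⟨mem_univ _, ?_⟩, rfl⟩)
    by_contra hi
    refine hyout fun j => ?_
    have := hz j
    rcases eq_or_ne j i with rfl | hj
    · simp only [Function.update_self]; omega
    · simpa [hj] using this
  · refine mem_union_right _ (mem_image.mpr ⟨i, mem_filter.mpr ⟨mem_univ _, ?_⟩, rfl⟩)
    by_contra hi
    refine hyout fun j => ?_
    have := hz j
    rcases eq_or_ne j i with rfl | hj
    · simp only [Function.update_self]; omega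
    · simpa [hj] using this

lemma sum_box_card_coord_eq_le (L : ℕ) (c : ℤ) :
    ∑ z ∈ box d L, #(univ.filter fun i => z i = c) ≤ d * L ^ (d - 1) := by
  simp only [card_filter]
  rw [sum_comm]
  calc ∑ i, ∑ z ∈ box d L, (if z i = c then 1 else 0)
      = ∑ i : Fin d, #((box d L).filter fun z => z i = c) := by simp only [card_filter]
    _ ≤ ∑ _i : Fin d, L ^ (d - 1) := sum_le_sum fun i _ => by
        rw [box, Fintype.card_filter_piFinset_const]
        split_ifs <;> simp
    _ = d * L ^ (d - 1) := by simp

lemma boundaryEdgeCount_box_mul_le (L : ℕ) : boundaryEdgeCount (box d L) * L ≤ 2 * d * L ^ d := by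
  have h : boundaryEdgeCount (box d L) ≤ 2 * d * L ^ (d - 1) :=
    calc ∑ z ∈ box d L, #(latNbrs z \ box d L)
        ≤ ∑ z ∈ box d L, (#(univ.filter fun i => z i = L - 1) + #(univ.filter fun i => z i = 0)) :=
          sum_le_sum fun z hz => (card_le_card (latNbrs_sdiff_box_subset hz)).trans <|
            (card_union_le _ _).trans <| add_le_add card_image_le card_image_le
      _ ≤ d * L ^ (d - 1) + d * L ^ (d - 1) := by
          rw [sum_add_distrib]
          exact add_le_add (sum_box_card_coord_eq_le L _) (sum_box_card_coord_eq_le L 0)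
      _ = 2 * d * L ^ (d - 1) := by ring
  calc boundaryEdgeCount (box d L) * L ≤ 2 * d * L ^ (d - 1) * L := Nat.mul_le_mul_right _ h
    _ = 2 * d * L ^ d := by cases d <;> simp [pow_succ]; ring

end Box

end FA1f

open FA1f in
theorem gapFA_le_general (d : ℕ) :
    ∃ C > (0 : ℝ), ∃ q₀ > (0 : ℝ), ∀ q : ℝ, 0 < q → q ≤ q₀ →
      gapFA d q ≤ C * q ^ 2 := by
  refine ⟨8 * d ^ 2 + 4 * d + 1, by positivity, 1 / (8 * (d + 1)), by positivity,
    fun q hq0 hq => ?_⟩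
  have hdq : 8 * (d + 1) * q ≤ 1 := by rwa [le_div_iff₀' (by positivity)] at hq
  set L := ⌈1 / q⌉₊
  have hqL : 1 ≤ q * L := (div_le_iff₀' hq0).mp (Nat.le_ceil _)
  have hbd : (boundaryEdgeCount (box d L) : ℝ) ≤ 2 * d * q * #(box d L) := by
    have h : (boundaryEdgeCount (box d L) * L : ℝ) ≤ 2 * d * #(box d L) := by
      rw [card_box]; exact_mod_cast boundaryEdgeCount_box_mul_le L
    nlinarith [(boundaryEdgeCount (box d L)).cast_nonneg (α := ℝ)]
  have hs : (box d L).Nonempty := card_pos.mp <| by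
    rw [card_box]; exact pow_pos (Nat.ceil_pos.mpr (by positivity)) d
  calc gapFA d q ≤ (8 * d ^ 2 + 4 * d) * q ^ 2 :=
        gapFA_le_of_boundaryEdgeCount_le hq0 (by nlinarith) (by nlinarith) hs hbd
    _ ≤ _ := by nlinarith [sq_nonneg q]

/-- in dimension `d ≥ 3`, the spectral gap of FA1f satisfies
`gap(L) ≤ C q²` for small `q`. -/
theorem gapFA_le (d : ℕ) (hd : 3 ≤ d) :
    ∃ C > (0 : ℝ), ∃ q₀ > (0 : ℝ), ∀ q : ℝ, 0 < q → q ≤ q₀ →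
      gapFA d q ≤ C * q ^ 2 :=
  gapFA_le_general d

end
end

section
/- Let d = 2 and q small. The FA1f Dirichlet form of f(η) = inf{log(1 + ‖x‖₁ ∧ ℓ) : η(x) = 0}, with ℓ = C₀q^{−1/2}, satisfies D(f) ≤ C q² log(1/q). -/
/-!
Flipping `x` adds or removes `x` from the set of empty sites. If some neighbour `y` of `x` is
empty, the infimum defining `f` then moves by at most the increase of `z ↦ log (1 + ‖z‖₁ ∧ ℓ)`
along one lattice step out of `x`, which is at most `1 / (1 + ‖x‖₁)` and vanishes once `‖x‖₁ ≥ ℓ`.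
As the constraint has probability at most `4q`, `D(f) ≤ 4 q² Σ_{‖x‖₁ ≤ ℓ} (1 + ‖x‖₁)⁻²`. The
sphere of radius `k` has at most `4 (k + 1)` points, so the sum is at most a harmonic sum
`4 (1 + log (ℓ + 1))`, and `log ℓ = log C₀ + ½ log (1/q)`.
-/

open Finset

noncomputable section

/-- The `ℓ¹` norm of `x ∈ ℤ²`. -/
def norm1 (x : Fin 2 → ℤ) : ℤ := ∑ i, |x i|

/-- The test function `f(η) = inf{log(1 + ‖x‖₁ ∧ ℓ) : η(x) = 0}`. -/
def fLog (ℓ : ℝ) (η : (Fin 2 → ℤ) → Bool) : ℝ :=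
  sInf {r : ℝ | ∃ x : Fin 2 → ℤ, η x = false ∧ r = Real.log (1 + min ((norm1 x : ℝ)) ℓ)}

/-- The box `Λ = {x ∈ ℤ² : ‖x‖₁ ≤ ℓ}` as a finite set. -/
def ballFinset (ℓ : ℝ) : Finset (Fin 2 → ℤ) :=
  (Fintype.piFinset fun _ => Finset.Icc (-⌈ℓ⌉) ⌈ℓ⌉).filter fun x => norm1 x ≤ ⌊ℓ⌋

section Lattice

variable {d : ℕ}

lemma flipCfg_self (η : (Fin d → ℤ) → Bool) (x : Fin d → ℤ) : flipCfg η x x = !η x := by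
  simp [flipCfg]

lemma flipCfg_of_ne (η : (Fin d → ℤ) → Bool) {x y : Fin d → ℤ} (h : y ≠ x) :
    flipCfg η x y = η y := by
  simp [flipCfg, h]

lemma flipCfg_flipCfg (η : (Fin d → ℤ) → Bool) (x : Fin d → ℤ) :
    flipCfg (flipCfg η x) x = η := by
  funext y
  by_cases h : y = x <;> simp [flipCfg, h]

lemma mem_latNbrs {x y : Fin d → ℤ} :
    y ∈ latNbrs x ↔ ∃ i, y = Function.update x i (x i + 1) ∨ y = Function.update x i (x i - 1) := by
  simp [latNbrs]

lemma ne_of_mem_latNbrs {x y : Fin d → ℤ} (h : y ∈ latNbrs x) : y ≠ x := by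
  obtain ⟨i, rfl | rfl⟩ := mem_latNbrs.1 h <;> intro hc <;> simpa using congrFun hc i

lemma card_latNbrs_le (x : Fin d → ℤ) : (latNbrs x).card ≤ 2 * d :=
  calc (latNbrs x).card ≤ ∑ _i : Fin d, 2 :=
        card_biUnion_le.trans (sum_le_sum fun _ _ => card_le_two)
    _ = 2 * d := by simp [mul_comm]

lemma exists_empty_latNbrs_flipCfg_iff {η : (Fin d → ℤ) → Bool} {x : Fin d → ℤ} :
    (∃ y ∈ latNbrs x, flipCfg η x y = false) ↔ ∃ y ∈ latNbrs x, η y = false := by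
  refine exists_congr fun y => and_congr_right fun hy => ?_
  rw [flipCfg_of_ne η (ne_of_mem_latNbrs hy)]

lemma cInd_nonneg (η : (Fin d → ℤ) → Bool) (x : Fin d → ℤ) : 0 ≤ cInd η x := by
  unfold cInd
  split <;> norm_num

end Lattice

section Expectation

variable {d : ℕ} {q : ℝ} {s : Finset (Fin d → ℤ)}

lemma Eloc_weight_nonneg (h0 : 0 ≤ q) (h1 : q ≤ 1) (η : ↥s → Bool) :
    0 ≤ ∏ v : ↥s, if η v then (1 - q) else q :=
  prod_nonneg fun v _ => by split <;> linarith

lemma Eloc_mono (h0 : 0 ≤ q) (h1 : q ≤ 1) {g h : ((Fin d → ℤ) → Bool) → ℝ}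
    (hle : ∀ η, g η ≤ h η) : Eloc q s g ≤ Eloc q s h :=
  sum_le_sum fun η _ => mul_le_mul_of_nonneg_left (hle _) (Eloc_weight_nonneg h0 h1 η)

lemma Eloc_nonneg (h0 : 0 ≤ q) (h1 : q ≤ 1) {g : ((Fin d → ℤ) → Bool) → ℝ}
    (hg : ∀ η, 0 ≤ g η) : 0 ≤ Eloc q s g :=
  sum_nonneg fun η _ => mul_nonneg (Eloc_weight_nonneg h0 h1 η) (hg _)

lemma Eloc_const_mul (c : ℝ) (g : ((Fin d → ℤ) → Bool) → ℝ) :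
    Eloc q s (fun η => c * g η) = c * Eloc q s g := by
  simp only [Eloc, mul_sum]
  exact sum_congr rfl fun η _ => by ring

lemma Eloc_sum {ι : Type*} (t : Finset ι) (g : ι → ((Fin d → ℤ) → Bool) → ℝ) :
    Eloc q s (fun η => ∑ y ∈ t, g y η) = ∑ y ∈ t, Eloc q s (g y) := by
  simp only [Eloc, mul_sum]
  exact sum_comm

lemma Eloc_indicator_empty {y : Fin d → ℤ} (hy : y ∈ s) :
    Eloc q s (fun η => if η y = false then 1 else 0) = q := by
  classical
  -- The summand factorises over the sites; only the factor at `y` has marginal `q` instead of `1`.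
  let Y : ↥s := ⟨y, hy⟩
  let u : ↥s → Bool → ℝ := fun v b =>
    (if b then 1 - q else q) * if v = Y then (if b = false then 1 else 0) else 1
  have hsummand : ∀ η : ↥s → Bool,
      (∏ v, if η v then 1 - q else q) * (if extendCfg s η y = false then 1 else 0) =
        ∏ v, u v (η v) := by
    intro η
    have hη : extendCfg s η y = η Y := dif_pos hy
    rw [hη, prod_mul_distrib, prod_ite_eq' univ Y]
    simp
  have hmarginal : ∀ v, ∑ b, u v b = if v = Y then q else 1 := by
    intro v
    by_cases h : v = Y <;> simp [u, h]
  simp only [Eloc, hsummand, ← Fintype.prod_sum, hmarginal, prod_ite_eq' univ Y, mem_univ,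
    if_true]

lemma Eloc_cInd_le (h0 : 0 ≤ q) (h1 : q ≤ 1) {x : Fin d → ℤ} (hsub : latNbrs x ⊆ s) :
    Eloc q s (fun η => cInd η x) ≤ 2 * d * q := by
  have hunion : ∀ η : (Fin d → ℤ) → Bool,
      cInd η x ≤ ∑ y ∈ latNbrs x, if η y = false then 1 else 0 := by
    intro η
    unfold cInd
    split_ifs with h
    · obtain ⟨y, hy, hyf⟩ := h
      exact (if_pos hyf).symm.le.trans
        (single_le_sum (f := fun z => if η z = false then (1 : ℝ) else 0)
          (fun z _ => by split <;> norm_num) hy)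
    · exact sum_nonneg fun z _ => by split <;> norm_num
  calc Eloc q s (fun η => cInd η x)
      ≤ ∑ y ∈ latNbrs x, Eloc q s (fun η => if η y = false then 1 else 0) := by
        rw [← Eloc_sum]; exact Eloc_mono h0 h1 hunion
    _ = (latNbrs x).card * q := by
        rw [sum_congr rfl fun y hy => Eloc_indicator_empty (hsub hy), sum_const, nsmul_eq_mul]
    _ ≤ 2 * d * q := by
        gcongr
        exact_mod_cast card_latNbrs_le x

end Expectation

lemma Dform_le_of_abs_flip_sub_le {d : ℕ} {q : ℝ} (h0 : 0 ≤ q) (h1 : q ≤ 1)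
    {s : Finset (Fin d → ℤ)} {f : ((Fin d → ℤ) → Bool) → ℝ} {w : (Fin d → ℤ) → ℝ}
    (hflip : ∀ η x, (∃ y ∈ latNbrs x, η y = false) → |f (flipCfg η x) - f η| ≤ w x)
    (hw : ∀ x ∉ s, w x = 0) :
    Dform q s f ≤ 2 * d * q ^ 2 * ∑ x ∈ s, w x ^ 2 := by
  set F : (Fin d → ℤ) → ℝ := fun x =>
    Eloc q (s ∪ insert x (latNbrs x)) (fun η => cInd η x * (f (flipCfg η x) - f η) ^ 2)
  have hpoint : ∀ η x, cInd η x * (f (flipCfg η x) - f η) ^ 2 ≤ w x ^ 2 * cInd η x := by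
    intro η x
    unfold cInd
    split_ifs with h
    · rw [one_mul, mul_one, ← sq_abs]
      exact pow_le_pow_left₀ (abs_nonneg _) (hflip η x h) 2
    · simp
  have hF_nonneg : ∀ x, 0 ≤ F x := fun x =>
    Eloc_nonneg h0 h1 fun η => mul_nonneg (cInd_nonneg η x) (sq_nonneg _)
  have hF_le : ∀ x, F x ≤ w x ^ 2 * (2 * d * q) := fun x =>
    calc F x ≤ Eloc q _ (fun η => w x ^ 2 * cInd η x) := Eloc_mono h0 h1 (hpoint · x)
      _ ≤ w x ^ 2 * (2 * d * q) := by
        rw [Eloc_const_mul]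
        exact mul_le_mul_of_nonneg_left
          (Eloc_cInd_le h0 h1 ((subset_insert _ _).trans subset_union_right)) (sq_nonneg _)
  have hF_zero : ∀ x ∉ s, F x = 0 := fun x hx =>
    le_antisymm (by simpa [hw x hx] using hF_le x) (hF_nonneg x)
  calc Dform q s f = q * (1 - q) * ∑ x ∈ s, F x := by rw [Dform, tsum_eq_sum hF_zero]
    _ ≤ q * 1 * ∑ x ∈ s, w x ^ 2 * (2 * d * q) := by
        gcongr
        · exact sum_nonneg fun x _ => hF_nonneg x
        · linarith
        · exact hF_le _
    _ = 2 * d * q ^ 2 * ∑ x ∈ s, w x ^ 2 := by rw [← sum_mul]; ring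

lemma norm1_nonneg (x : Fin 2 → ℤ) : 0 ≤ norm1 x :=
  sum_nonneg fun _ _ => abs_nonneg _

lemma norm1_cast_nonneg (x : Fin 2 → ℤ) : (0 : ℝ) ≤ norm1 x := by
  exact_mod_cast norm1_nonneg x

lemma abs_le_norm1 (x : Fin 2 → ℤ) (i : Fin 2) : |x i| ≤ norm1 x :=
  single_le_sum (f := fun j => |x j|) (fun _ _ => abs_nonneg _) (mem_univ i)

lemma norm1_update (x : Fin 2 → ℤ) (i : Fin 2) (a : ℤ) :
    norm1 (Function.update x i a) = norm1 x - |x i| + |a| := by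
  simp only [norm1, ← add_sum_erase _ _ (mem_univ i), Function.update_self]
  rw [sum_congr rfl fun j hj => by rw [Function.update_of_ne (ne_of_mem_erase hj)]]
  ring

lemma norm1_le_of_mem_latNbrs {x y : Fin 2 → ℤ} (h : y ∈ latNbrs x) : norm1 y ≤ norm1 x + 1 := by
  obtain ⟨i, rfl | rfl⟩ := mem_latNbrs.1 h <;> rw [norm1_update]
  · linarith [abs_add_le (x i) 1, abs_one (α := ℤ)]
  · linarith [abs_sub (x i) 1, abs_one (α := ℤ)]

section TruncatedLog

variable {ℓ : ℝ}

def truncLog (ℓ : ℝ) (z : Fin 2 → ℤ) : ℝ := Real.log (1 + min (norm1 z : ℝ) ℓ)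

/-- The largest increase of `truncLog ℓ` along one lattice step out of `x`. -/
def truncLogGap (ℓ : ℝ) (x : Fin 2 → ℤ) : ℝ :=
  Real.log (1 + min ((norm1 x : ℝ) + 1) ℓ) - truncLog ℓ x

lemma fLog_eq_sInf_image (η : (Fin 2 → ℤ) → Bool) :
    fLog ℓ η = sInf (truncLog ℓ '' {z | η z = false}) := by
  simp only [fLog, truncLog, Set.image, Set.mem_ofPred_eq, eq_comm]

lemma one_add_min_pos (hℓ : 0 ≤ ℓ) {t : ℝ} (ht : 0 ≤ t) : 0 < 1 + min t ℓ := by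
  linarith [le_min ht hℓ]

lemma truncLog_nonneg (hℓ : 0 ≤ ℓ) (z : Fin 2 → ℤ) : 0 ≤ truncLog ℓ z :=
  Real.log_nonneg (by linarith [le_min (norm1_cast_nonneg z) hℓ])

lemma truncLogGap_nonneg (hℓ : 0 ≤ ℓ) (x : Fin 2 → ℤ) : 0 ≤ truncLogGap ℓ x := by
  rw [truncLogGap, truncLog, sub_nonneg]
  gcongr
  · exact one_add_min_pos hℓ (norm1_cast_nonneg x)
  · linarith

lemma truncLogGap_le (hℓ : 0 ≤ ℓ) (x : Fin 2 → ℤ) : truncLogGap ℓ x ≤ 1 / (1 + (norm1 x : ℝ)) := by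
  have hN := norm1_cast_nonneg x
  rcases le_total ℓ (norm1 x) with hle | hlt
  · rw [truncLogGap, truncLog, min_eq_right hle, min_eq_right (by linarith), sub_self]
    positivity
  · calc truncLogGap ℓ x ≤ Real.log (1 + (norm1 x + 1)) - Real.log (1 + norm1 x) := by
          rw [truncLogGap, truncLog, min_eq_left hlt]
          gcongr
          exact min_le_left _ _
      _ = Real.log (1 + 1 / (1 + norm1 x)) := by
          rw [← Real.log_div (by linarith) (by linarith)]
          congr 1
          field_simp
          ring
      _ ≤ 1 / (1 + (norm1 x : ℝ)) := by
          linarith [Real.log_le_sub_one_of_pos (x := 1 + 1 / (1 + (norm1 x : ℝ))) (by positivity)]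

lemma truncLogGap_eq_zero {x : Fin 2 → ℤ} (hx : ℓ ≤ norm1 x) : truncLogGap ℓ x = 0 := by
  rw [truncLogGap, truncLog, min_eq_right hx, min_eq_right (by linarith), sub_self]

lemma truncLog_le_add_truncLogGap (hℓ : 0 ≤ ℓ) {x y : Fin 2 → ℤ} (h : y ∈ latNbrs x) :
    truncLog ℓ y ≤ truncLog ℓ x + truncLogGap ℓ x := by
  have hxy : (norm1 y : ℝ) ≤ norm1 x + 1 := by exact_mod_cast norm1_le_of_mem_latNbrs h
  rw [truncLogGap, add_sub_cancel, truncLog]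
  gcongr
  exact one_add_min_pos hℓ (norm1_cast_nonneg y)

end TruncatedLog

lemma abs_csInf_insert_sub_le {S : Set ℝ} (hS : BddBelow S) {a b δ : ℝ} (hb : b ∈ S)
    (hba : b ≤ a + δ) (hδ : 0 ≤ δ) : |sInf (insert a S) - sInf S| ≤ δ := by
  have hinf : sInf S ≤ b := csInf_le hS hb
  rw [csInf_insert hS ⟨b, hb⟩]
  rcases le_total a (sInf S) with hle | hle
  · rw [min_eq_left hle, abs_sub_comm, abs_of_nonneg (by linarith)]
    linarith
  · rwa [min_eq_right hle, sub_self, abs_zero]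

lemma setOf_flipCfg_eq_false {d : ℕ} {η : (Fin d → ℤ) → Bool} {x : Fin d → ℤ} (hx : η x = true) :
    {z | flipCfg η x z = false} = insert x {z | η z = false} := by
  ext z
  by_cases h : z = x
  · subst h; simp [flipCfg_self, hx]
  · simp [flipCfg_of_ne η h, h]

lemma abs_fLog_flipCfg_sub_le {ℓ : ℝ} (hℓ : 0 ≤ ℓ) (η : (Fin 2 → ℤ) → Bool) (x : Fin 2 → ℤ)
    (h : ∃ y ∈ latNbrs x, η y = false) :
    |fLog ℓ (flipCfg η x) - fLog ℓ η| ≤ truncLogGap ℓ x := by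
  wlog hx : η x = true generalizing η
  · have hx' : flipCfg η x x = true := by simp [flipCfg_self, hx]
    have := this (flipCfg η x) (exists_empty_latNbrs_flipCfg_iff.2 h) hx'
    rwa [flipCfg_flipCfg, abs_sub_comm] at this
  obtain ⟨y, hy, hyf⟩ := h
  have hbdd : BddBelow (truncLog ℓ '' {z | η z = false}) :=
    ⟨0, Set.forall_mem_image.2 fun z _ => truncLog_nonneg hℓ z⟩
  rw [fLog_eq_sInf_image, fLog_eq_sInf_image, setOf_flipCfg_eq_false hx, Set.image_insert_eq]
  exact abs_csInf_insert_sub_le hbdd (Set.mem_image_of_mem _ hyf)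
    (truncLog_le_add_truncLogGap hℓ hy) (truncLogGap_nonneg hℓ x)

lemma le_norm1_of_notMem_ballFinset {ℓ : ℝ} {x : Fin 2 → ℤ} (hx : x ∉ ballFinset ℓ) :
    ℓ ≤ norm1 x := by
  by_contra! hlt
  have hfloor : norm1 x ≤ ⌊ℓ⌋ := Int.le_floor.2 hlt.le
  refine hx (mem_filter.2 ⟨Fintype.mem_piFinset.2 fun i => mem_Icc.2 (abs_le.1 ?_), hfloor⟩)
  exact (abs_le_norm1 x i).trans (hfloor.trans (Int.floor_le_ceil ℓ))

lemma card_le_of_norm1_eq (S : Finset (Fin 2 → ℤ)) (n : ℕ) (hS : ∀ x ∈ S, norm1 x = n) :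
    S.card ≤ 4 * (n + 1) := by
  have hn : ∀ x ∈ S, |x 0| + |x 1| = n := fun x hx => by
    simpa [norm1, Fin.sum_univ_two] using hS x hx
  have hinj : Set.InjOn (fun x : Fin 2 → ℤ => (x 0, decide (0 ≤ x 1))) S := by
    intro x hx y hy hxy
    simp only [Prod.mk.injEq, decide_eq_decide] at hxy
    obtain ⟨h0, hsign⟩ := hxy
    have h1 : |x 1| = |y 1| := by
      have := hn x hx
      rw [h0] at this
      linarith [hn y hy]
    funext i
    fin_cases i
    · exact h0
    · show x 1 = y 1
      rcases abs_eq_abs.1 h1 with h | h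
      · exact h
      · by_cases hx1 : 0 ≤ x 1
        · linarith [hsign.1 hx1]
        · linarith [mt hsign.2 hx1]
  calc S.card ≤ (Icc (-(n : ℤ)) n ×ˢ (univ : Finset Bool)).card := by
        refine card_le_card_of_injOn _ (fun x hx => ?_) hinj
        have := hn x hx
        simp only [coe_product, coe_Icc, coe_univ, Set.mem_prod, Set.mem_Icc, Set.mem_univ,
          and_true]
        constructor <;> linarith [neg_abs_le (x 0), le_abs_self (x 0), abs_nonneg (x 1)]
    _ = 4 * (n + 1) - 2 := by simp; omega
    _ ≤ 4 * (n + 1) := Nat.sub_le _ _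

lemma sum_ballFinset_inv_sq_le {ℓ : ℝ} (hℓ : 0 ≤ ℓ) :
    ∑ x ∈ ballFinset ℓ, 1 / (1 + (norm1 x : ℝ)) ^ 2 ≤ 4 * (1 + Real.log (ℓ + 1)) := by
  set B := ballFinset ℓ
  set T := ⌊ℓ⌋₊ + 1
  have hnorm : ∀ x, ((norm1 x).toNat : ℝ) = norm1 x := fun x => by
    exact_mod_cast Int.toNat_of_nonneg (norm1_nonneg x)
  have hmaps : ∀ x ∈ B, (norm1 x).toNat ∈ range T := fun x hx => by
    have hx : norm1 x ≤ ⌊ℓ⌋ := (mem_filter.1 hx).2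
    simp only [T, mem_range, ← Int.floor_toNat]
    omega
  have hshell : ∀ k ∈ range T,
      ∑ x ∈ B with (norm1 x).toNat = k, 1 / (1 + (norm1 x : ℝ)) ^ 2 ≤ 4 / ((k : ℝ) + 1) := by
    intro k _
    have hcard : (B.filter fun x => (norm1 x).toNat = k).card ≤ 4 * (k + 1) :=
      card_le_of_norm1_eq _ k fun x hx => by
        have := (mem_filter.1 hx).2
        have := norm1_nonneg x
        omega
    calc ∑ x ∈ B with (norm1 x).toNat = k, 1 / (1 + (norm1 x : ℝ)) ^ 2
        = (B.filter fun x => (norm1 x).toNat = k).card * (1 / ((k : ℝ) + 1) ^ 2) := by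
          rw [← nsmul_eq_mul, ← sum_const]
          refine sum_congr rfl fun x hx => ?_
          rw [← (mem_filter.1 hx).2, hnorm, add_comm]
      _ ≤ (4 * ((k : ℝ) + 1)) * (1 / ((k : ℝ) + 1) ^ 2) := by gcongr; exact_mod_cast hcard
      _ = 4 / ((k : ℝ) + 1) := by field_simp
  have hharmonic : ∑ k ∈ range T, 4 / ((k : ℝ) + 1) ≤ 4 * (1 + Real.log T) := by
    have h := harmonic_le_one_add_log T
    push_cast [harmonic] at h
    simp only [div_eq_mul_inv, ← mul_sum]
    gcongr
  have hT : Real.log T ≤ Real.log (ℓ + 1) := by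
    gcongr
    push_cast [T]
    linarith [Nat.floor_le hℓ]
  calc ∑ x ∈ B, 1 / (1 + (norm1 x : ℝ)) ^ 2
      = ∑ k ∈ range T, ∑ x ∈ B with (norm1 x).toNat = k, 1 / (1 + (norm1 x : ℝ)) ^ 2 :=
        (sum_fiberwise_of_maps_to hmaps _).symm
    _ ≤ ∑ k ∈ range T, 4 / ((k : ℝ) + 1) := sum_le_sum hshell
    _ ≤ 4 * (1 + Real.log (ℓ + 1)) := by linarith

lemma sum_ballFinset_truncLogGap_sq_le {ℓ : ℝ} (hℓ : 0 ≤ ℓ) :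
    ∑ x ∈ ballFinset ℓ, truncLogGap ℓ x ^ 2 ≤ 4 * (1 + Real.log (ℓ + 1)) :=
  calc ∑ x ∈ ballFinset ℓ, truncLogGap ℓ x ^ 2
      ≤ ∑ x ∈ ballFinset ℓ, 1 / (1 + (norm1 x : ℝ)) ^ 2 := sum_le_sum fun x _ => by
        rw [← one_div_pow]
        exact pow_le_pow_left₀ (truncLogGap_nonneg hℓ x) (truncLogGap_le hℓ x) 2
    _ ≤ 4 * (1 + Real.log (ℓ + 1)) := sum_ballFinset_inv_sq_le hℓ

lemma one_add_log_div_sqrt_add_one_le {C₀ q : ℝ} (hC₀ : 0 < C₀) (hq : 0 < q) (hqC : q ≤ C₀ ^ 2)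
    (hqe : q ≤ Real.exp (-1)) :
    1 + Real.log (C₀ / √q + 1) ≤ (2 + |Real.log (2 * C₀)|) * Real.log (1 / q) := by
  have hsqrt : 0 < √q := Real.sqrt_pos.2 hq
  have hℓ : 1 ≤ C₀ / √q := by
    rw [le_div_iff₀ hsqrt, one_mul]
    simpa [Real.sqrt_sq hC₀.le] using Real.sqrt_le_sqrt hqC
  have hL : 1 ≤ Real.log (1 / q) := by
    rw [one_div, Real.log_inv, le_neg]
    simpa using Real.log_le_log hq hqe
  have hlog : Real.log (C₀ / √q + 1) ≤ Real.log (2 * C₀) + Real.log (1 / q) / 2 :=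
    calc Real.log (C₀ / √q + 1) ≤ Real.log (2 * (C₀ / √q)) := by gcongr; linarith
      _ = Real.log (2 * C₀) + Real.log (1 / q) / 2 := by
        rw [mul_div_assoc', Real.log_div (by positivity) hsqrt.ne', Real.log_sqrt hq.le, one_div,
          Real.log_inv]
        ring
  nlinarith [le_abs_self (Real.log (2 * C₀)), abs_nonneg (Real.log (2 * C₀))]

/-- for `d = 2`, `ℓ = C₀ q^{−1/2}`, the FA1f Dirichlet form of
`f(η) = inf{log(1 + ‖x‖₁ ∧ ℓ) : η(x) = 0}` satisfies `D(f) ≤ C q² log(1/q)` for small `q`. -/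
theorem dirichlet_fLog_le (C₀ : ℝ) (hC₀ : 0 < C₀) :
    ∃ C > (0 : ℝ), ∃ q₀ > (0 : ℝ), ∀ q : ℝ, 0 < q → q ≤ q₀ →
      Dform q (ballFinset (C₀ / Real.sqrt q)) (fLog (C₀ / Real.sqrt q)) ≤
        C * q ^ 2 * Real.log (1 / q) := by
  refine ⟨16 * (2 + |Real.log (2 * C₀)|), by positivity, min (C₀ ^ 2) (Real.exp (-1)),
    by positivity, fun q hq hq₀ => ?_⟩
  have hqC : q ≤ C₀ ^ 2 := hq₀.trans (min_le_left _ _)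
  have hqe : q ≤ Real.exp (-1) := hq₀.trans (min_le_right _ _)
  have hq1 : q ≤ 1 := hqe.trans (Real.exp_le_one_iff.2 (by norm_num))
  set ℓ := C₀ / √q
  have hℓ : 0 ≤ ℓ := by positivity
  calc Dform q (ballFinset ℓ) (fLog ℓ)
      ≤ 2 * (2 : ℕ) * q ^ 2 * ∑ x ∈ ballFinset ℓ, truncLogGap ℓ x ^ 2 :=
        Dform_le_of_abs_flip_sub_le hq.le hq1 (abs_fLog_flipCfg_sub_le hℓ)
          fun x hx => truncLogGap_eq_zero (le_norm1_of_notMem_ballFinset hx)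
    _ ≤ 2 * (2 : ℕ) * q ^ 2 * (4 * (1 + Real.log (ℓ + 1))) := by
        gcongr
        exact sum_ballFinset_truncLogGap_sq_le hℓ
    _ ≤ 2 * (2 : ℕ) * q ^ 2 * (4 * ((2 + |Real.log (2 * C₀)|) * Real.log (1 / q))) := by
        gcongr
        exact one_add_log_div_sqrt_add_one_le hC₀ hq hqC hqe
    _ = 16 * (2 + |Real.log (2 * C₀)|) * q ^ 2 * Real.log (1 / q) := by push_cast; ring
end
end
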